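/- arXiv:2011.03455 — 5 statements merged into one kernel-verified Lean document; each statement's English description precedes it below -/
import Mathlib

section
/- For real d ≥ 0 and 0 < θ < π, the function f(x) = -cos(x)·cos(θ - x) + sin(x)·sin(θ - x)·cosh(d) is monotonically increasing on [0, θ/2]. -/
/-! Since `cos θ = cos x cos (θ - x) - sin x sin (θ - x)`, the function equals
`-cos θ + sin x sin (θ - x) (cosh d - 1)`, and `sin x sin (θ - x) = (cos (θ - 2x) - cos θ) / 2`
increases on `[0, θ/2]` because `θ - 2x` decreases there inside `[0, π]`, where `cos` is
antitone. -/

open Real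

lemma Real.sin_mul_sin_sub (x θ : ℝ) :
    sin x * sin (θ - x) = (cos (θ - 2 * x) - cos θ) / 2 := by
  have h := cos_sub_cos (θ - 2 * x) θ
  rw [show (θ - 2 * x + θ) / 2 = θ - x by ring, show (θ - 2 * x - θ) / 2 = -x by ring,
    sin_neg] at h
  linarith

lemma Real.monotoneOn_sin_mul_sin_sub {θ : ℝ} (hθ : θ ≤ π) :
    MonotoneOn (fun x => sin x * sin (θ - x)) (Set.Icc 0 (θ / 2)) := by
  intro x hx y hy hxy
  have hcos : cos (θ - 2 * x) ≤ cos (θ - 2 * y) :=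
    cos_le_cos_of_nonneg_of_le_pi (by linarith [hy.2]) (by linarith [hx.1]) (by linarith)
  simp only [sin_mul_sin_sub]
  linarith

lemma Real.neg_cos_mul_cos_sub_add_sin_mul_sin_sub_mul (x θ c : ℝ) :
    -cos x * cos (θ - x) + sin x * sin (θ - x) * c
      = -cos θ + sin x * sin (θ - x) * (c - 1) := by
  have h : cos θ = cos x * cos (θ - x) - sin x * sin (θ - x) := by
    rw [← cos_add, add_sub_cancel]
  rw [h]
  ring

theorem monotone_balanced_angle_general (d θ : ℝ) (hθπ : θ < π) :
    MonotoneOn (fun x : ℝ => -Real.cos x * Real.cos (θ - x)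
      + Real.sin x * Real.sin (θ - x) * Real.cosh d) (Set.Icc 0 (θ / 2)) := by
  intro x hx y hy hxy
  simp only [neg_cos_mul_cos_sub_add_sin_mul_sin_sub_mul]
  have hmono := monotoneOn_sin_mul_sin_sub hθπ.le hx hy hxy
  have hcosh : 0 ≤ cosh d - 1 := sub_nonneg.mpr (one_le_cosh d)
  gcongr

theorem monotone_balanced_angle (d θ : ℝ) (hd : 0 ≤ d) (hθ0 : 0 < θ) (hθπ : θ < π) :
    MonotoneOn (fun x : ℝ => -Real.cos x * Real.cos (θ - x)
      + Real.sin x * Real.sin (θ - x) * Real.cosh d) (Set.Icc 0 (θ / 2)) :=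
  monotone_balanced_angle_general d θ hθπ
end

section
/- For real d ≥ 0 and angles 0 < α < π < β < 2π with α + β < 2π and θ = (α+β)/2, we have cos(α/2)·cos((2π-β)/2) + sin(α/2)·sin((2π-β)/2)·cosh(d) ≤ -cos²(θ/2) + sin²(θ/2)·cosh(d). -/
/-! Writing `a = α / 2`, `b = β / 2` and `C = cosh d`, the left side is
`-cos a cos b + sin a sin b C` and the right side is its value at the balanced pair of angles
`((a + b) / 2, (a + b) / 2)`. By the product-to-sum and half-angle formulas the gap is
`(1 - cos (a - b)) (C - 1) / 2`, which is nonnegative since `C ≥ 1`. -/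

open Real

lemma balanced_sub_neg_cos_mul_cos_add_sin_mul_sin_mul (x y c : ℝ) :
    (-cos ((x + y) / 2) ^ 2 + sin ((x + y) / 2) ^ 2 * c)
      - (-cos x * cos y + sin x * sin y * c) = (1 - cos (x - y)) * (c - 1) / 2 := by
  have hcos_sq : cos ((x + y) / 2) ^ 2 = 1 / 2 + cos (x + y) / 2 := by
    rw [cos_sq, show 2 * ((x + y) / 2) = x + y by ring]
  have hsin_sq : sin ((x + y) / 2) ^ 2 = 1 / 2 - cos (x + y) / 2 := by
    rw [sin_sq_eq_half_sub, show 2 * ((x + y) / 2) = x + y by ring]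
  rw [hcos_sq, hsin_sq, cos_add, cos_sub]
  ring

lemma neg_cos_mul_cos_add_sin_mul_sin_mul_le_balanced (x y : ℝ) {c : ℝ} (hc : 1 ≤ c) :
    -cos x * cos y + sin x * sin y * c
      ≤ -cos ((x + y) / 2) ^ 2 + sin ((x + y) / 2) ^ 2 * c := by
  have hgap : 0 ≤ (1 - cos (x - y)) * (c - 1) / 2 :=
    div_nonneg (mul_nonneg (sub_nonneg.2 (cos_le_one _)) (sub_nonneg.2 hc)) zero_le_two
  linarith [balanced_sub_neg_cos_mul_cos_add_sin_mul_sin_mul x y c]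

theorem opposite_reflected_balanced_bound_general (d α β θ : ℝ)
    (hθ : θ = (α + β) / 2) :
    Real.cos (α / 2) * Real.cos ((2 * π - β) / 2)
      + Real.sin (α / 2) * Real.sin ((2 * π - β) / 2) * Real.cosh d
      ≤ -(Real.cos (θ / 2)) ^ 2 + (Real.sin (θ / 2)) ^ 2 * Real.cosh d := by
  have hreflect : (2 * π - β) / 2 = π - β / 2 := by ring
  have hhalf : θ / 2 = (α / 2 + β / 2) / 2 := by rw [hθ]; ring
  rw [hreflect, cos_pi_sub, sin_pi_sub, hhalf, mul_neg, ← neg_mul]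
  exact neg_cos_mul_cos_add_sin_mul_sin_mul_le_balanced _ _ (one_le_cosh d)

theorem opposite_reflected_balanced_bound (d α β θ : ℝ) (hd : 0 ≤ d)
    (hα0 : 0 < α) (hαπ : α < π) (hπβ : π < β) (hβ : β < 2 * π)
    (hsum : α + β < 2 * π) (hθ : θ = (α + β) / 2) :
    Real.cos (α / 2) * Real.cos ((2 * π - β) / 2)
      + Real.sin (α / 2) * Real.sin ((2 * π - β) / 2) * Real.cosh d
      ≤ -(Real.cos (θ / 2)) ^ 2 + (Real.sin (θ / 2)) ^ 2 * Real.cosh d :=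
  opposite_reflected_balanced_bound_general d α β θ hθ
end

section
/- The function s ↦ s / arccosh((4/3)·cosh(s/2) + 1/3) is monotonically increasing on (0, ∞). -/
/-!
Writing `h u = arcosh (k * cosh u)` with `k = √(4/3)`, the duplication formula
`cosh (2 t) = 2 cosh² t - 1` turns the denominator into `2 * h (s / 4)`, so it suffices that
`h` is subhomogeneous: `h (l * u) ≤ l * h u` for `l ≥ 1`. With `t = h u ≥ u`, this amounts to
`k * cosh (l * u) ≤ cosh (l * t)`, which after multiplying by `cosh u = cosh t / k` is the
product-to-sum comparison `cosh t * cosh (l * u) ≤ cosh (l * t) * cosh u`.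
-/

open Real

noncomputable def arccosh (x : ℝ) : ℝ := Real.log (x + Real.sqrt (x ^ 2 - 1))

theorem arccosh_eq_arcosh : arccosh = arcosh := rfl

namespace Real

theorem cosh_two_mul_eq_two_mul_cosh_sq_sub_one (x : ℝ) : cosh (2 * x) = 2 * cosh x ^ 2 - 1 := by
  rw [cosh_two_mul, cosh_sq]; ring

theorem cosh_mul_cosh (x y : ℝ) : cosh x * cosh y = (cosh (x + y) + cosh (x - y)) / 2 := by
  rw [cosh_add, cosh_sub]; ring

theorem cosh_mul_cosh_mul_le_cosh_mul_mul_cosh {a u l : ℝ} (ha : 0 ≤ a) (hau : a ≤ u)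
    (hl : 1 ≤ l) : cosh u * cosh (l * a) ≤ cosh (l * u) * cosh a := by
  have hlu : 0 ≤ l * u - a := by nlinarith
  have hsum : cosh (u + l * a) ≤ cosh (l * u + a) := by
    rw [cosh_le_cosh, abs_of_nonneg (by nlinarith), abs_of_nonneg (by nlinarith)]
    nlinarith
  have hdiff : cosh (u - l * a) ≤ cosh (l * u - a) := by
    rw [cosh_le_cosh, abs_of_nonneg hlu]
    exact abs_le.mpr ⟨by nlinarith, by nlinarith⟩
  rw [cosh_mul_cosh, cosh_mul_cosh]
  linarith

theorem arcosh_mul_cosh_mul_le {k l u : ℝ} (hk : 1 ≤ k) (hl : 1 ≤ l) (hu : 0 ≤ u) :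
    arcosh (k * cosh (l * u)) ≤ l * arcosh (k * cosh u) := by
  set t := arcosh (k * cosh u)
  have hcu : 0 < cosh u := cosh_pos u
  have hkcu : 1 ≤ k * cosh u := one_le_mul_of_one_le_of_one_le hk (one_le_cosh u)
  have hcosht : cosh t = k * cosh u := cosh_arcosh hkcu
  have ht : 0 ≤ t := arcosh_nonneg hkcu
  have hut : u ≤ t := by
    rw [← abs_of_nonneg hu, ← abs_of_nonneg ht, ← cosh_le_cosh, hcosht]
    nlinarith
  have hkey : k * cosh (l * u) ≤ cosh (l * t) := by
    have := cosh_mul_cosh_mul_le_cosh_mul_mul_cosh hu hut hl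
    rw [hcosht] at this
    nlinarith
  calc arcosh (k * cosh (l * u)) ≤ arcosh (cosh (l * t)) :=
        (arcosh_le_arcosh (by positivity) (cosh_pos _)).mpr hkey
    _ = l * t := arcosh_cosh (by positivity)

theorem arcosh_two_mul_sq_sub_one {x : ℝ} (hx : 1 ≤ x) :
    arcosh (2 * x ^ 2 - 1) = 2 * arcosh x := by
  conv_lhs => rw [← cosh_arcosh hx]
  rw [← cosh_two_mul_eq_two_mul_cosh_sq_sub_one, arcosh_cosh (by linarith [arcosh_nonneg hx])]

end Real

theorem monotoneOn_div_of_le_mul {f : ℝ → ℝ} (hpos : ∀ x, 0 < x → 0 < f x)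
    (hsub : ∀ x, 0 < x → ∀ l, 1 ≤ l → f (l * x) ≤ l * f x) :
    MonotoneOn (fun x => x / f x) (Set.Ioi 0) := by
  intro a (ha : 0 < a) b (hb : 0 < b) hab
  have hl : 1 ≤ b / a := (one_le_div ha).mpr hab
  have hfb : f b ≤ b / a * f a := by simpa [div_mul_cancel₀ b ha.ne'] using hsub a ha _ hl
  rw [div_le_div_iff₀ (hpos a ha) (hpos b hb)]
  calc a * f b ≤ a * (b / a * f a) := by gcongr
    _ = b * f a := by field_simp

theorem ratio_function_monotone :
    MonotoneOn (fun s : ℝ => s / arccosh (4 / 3 * Real.cosh (s / 2) + 1 / 3))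
      (Set.Ioi 0) := by
  simp only [arccosh_eq_arcosh]
  have hk : 1 ≤ √(4 / 3) := one_le_sqrt.mpr (by norm_num)
  have hhalf (s : ℝ) :
      arcosh (4 / 3 * cosh (s / 2) + 1 / 3) = 2 * arcosh (√(4 / 3) * cosh (s / 4)) := by
    rw [← arcosh_two_mul_sq_sub_one (one_le_mul_of_one_le_of_one_le hk (one_le_cosh _)),
      mul_pow, sq_sqrt (by norm_num), show s / 2 = 2 * (s / 4) by ring,
      cosh_two_mul_eq_two_mul_cosh_sq_sub_one]
    congr 1; ring
  refine monotoneOn_div_of_le_mul (fun s hs => arcosh_pos ?_) (fun s _ l hl => ?_)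
  · linarith [one_lt_cosh.mpr (show s / 2 ≠ 0 by positivity)]
  · rw [hhalf, hhalf, mul_div_assoc, mul_left_comm]
    gcongr
    exact arcosh_mul_cosh_mul_le hk hl (by positivity)
end

section
/- If s, D > 0 satisfy 4·cosh(s/2) ≤ 3·cosh(D) − 1 and s ≤ 2·arccosh(1 + √2), then s/D ≤ 2·arccosh(1+√2) / arccosh((5 + 4√2)/3). -/
open Real

/-!
With a = arccosh (1 + √2) and b = arccosh ((5 + 4√2) / 3) we have 3 cosh b = 4 cosh a + 1, and
the point is that 3 cosh (t b) ≤ 4 cosh (t a) + 1 persists for t ∈ (0, 1]; taking t = s / (2a)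
then forces t b ≤ D, i.e. s / D ≤ 2a / b. In half angles the relation reads
3 sinh² (b/2) = 4 sinh² (a/2) + 1, so it suffices that t ↦ sinh (t b/2) / sinh (t a/2) increases.
Its logarithmic derivative is governed by x coth x, which increases because, after the
product-to-sum formulas, this is the monotonicity of sinh x / x, read off the power series.
-/

open Set

theorem mul_sinh_le_mul_sinh {u v : ℝ} (hv : 0 ≤ v) (hvu : v ≤ u) :
    u * sinh v ≤ v * sinh u := by
  refine hasSum_le (fun n => ?_) ((hasSum_sinh v).mul_left u) ((hasSum_sinh u).mul_left v)
  have hpow : v ^ (2 * n) ≤ u ^ (2 * n) := pow_le_pow_left₀ hv hvu _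
  have huv : 0 ≤ u * v := mul_nonneg (hv.trans hvu) hv
  rw [mul_div_assoc', mul_div_assoc']
  gcongr ?_ / _
  calc u * v ^ (2 * n + 1) = u * v * v ^ (2 * n) := by ring
    _ ≤ u * v * u ^ (2 * n) := by gcongr
    _ = v * u ^ (2 * n + 1) := by ring

theorem mul_sinh_mul_cosh_le {x y : ℝ} (hy : 0 ≤ y) (hyx : y ≤ x) :
    y * (sinh x * cosh y) ≤ x * (sinh y * cosh x) := by
  have h := mul_sinh_le_mul_sinh (u := x + y) (v := x - y) (by linarith) (by linarith)
  rw [sinh_add, sinh_sub] at h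
  linear_combination h / 2

theorem monotoneOn_sinh_mul_div_sinh_mul {α β : ℝ} (hα : 0 < α) (hαβ : α ≤ β) :
    MonotoneOn (fun t => sinh (t * β) / sinh (t * α)) (Ioi 0) := by
  have hderiv : ∀ t ∈ Ioi (0 : ℝ), HasDerivAt (fun t => sinh (t * β) / sinh (t * α))
      ((cosh (t * β) * β * sinh (t * α) - sinh (t * β) * (cosh (t * α) * α)) /
        sinh (t * α) ^ 2) t := fun t ht =>
    ((hasDerivAt_mul_const β).sinh).div ((hasDerivAt_mul_const α).sinh)
      (sinh_pos_iff.2 (mul_pos ht hα)).ne'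
  refine monotoneOn_of_hasDerivWithinAt_nonneg (convex_Ioi 0)
    (fun t ht => (hderiv t ht).continuousAt.continuousWithinAt)
    (fun t ht => (hderiv t (interior_subset ht)).hasDerivWithinAt) fun t ht => ?_
  rw [interior_Ioi] at ht
  have h := mul_sinh_mul_cosh_le (mul_pos ht hα).le (mul_le_mul_of_nonneg_left hαβ ht.le)
  have hcoth : α * (sinh (t * β) * cosh (t * α)) ≤ β * (sinh (t * α) * cosh (t * β)) :=
    le_of_mul_le_mul_left (by linarith) ht
  exact div_nonneg (by linarith) (sq_nonneg _)

theorem sinh_mul_mul_sinh_le {α β t : ℝ} (hα : 0 < α) (hαβ : α ≤ β) (ht : 0 < t)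
    (ht1 : t ≤ 1) :
    sinh (t * β) * sinh α ≤ sinh β * sinh (t * α) := by
  have h := monotoneOn_sinh_mul_div_sinh_mul hα hαβ ht (one_pos : (0:ℝ) < 1) ht1
  simp only [one_mul] at h
  rwa [div_le_div_iff₀ (sinh_pos_iff.2 (mul_pos ht hα)) (sinh_pos_iff.2 hα)] at h

theorem cosh_eq_two_mul_sinh_half_sq_add_one (x : ℝ) : cosh x = 2 * sinh (x / 2) ^ 2 + 1 := by
  have h := cosh_two_mul (x / 2)
  rw [mul_div_cancel₀ _ two_ne_zero, cosh_sq] at h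
  linarith

theorem three_cosh_mul_le {a b t : ℝ} (ha : 0 < a) (hb : 0 ≤ b)
    (h : 3 * cosh b = 4 * cosh a + 1) (ht : 0 < t) (ht1 : t ≤ 1) : 3 * cosh (t * b) ≤ 4 * cosh (t * a) + 1 := by
  have hab : a ≤ b := by
    have : cosh a ≤ cosh b := by linarith [one_le_cosh a]
    rwa [cosh_le_cosh, abs_of_pos ha, abs_of_nonneg hb] at this
  simp only [cosh_eq_two_mul_sinh_half_sq_add_one, mul_div_assoc] at h ⊢
  have hA : 0 < sinh (a / 2) := sinh_pos_iff.2 (half_pos ha)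
  have htA : 0 ≤ sinh (t * (a / 2)) := sinh_nonneg_iff.2 (by positivity)
  have htB : 0 ≤ sinh (t * (b / 2)) := sinh_nonneg_iff.2 (by positivity)
  have htA_le : sinh (t * (a / 2)) ≤ sinh (a / 2) :=
    sinh_le_sinh.2 (mul_le_of_le_one_left (half_pos ha).le ht1)
  have hratio :
      (sinh (t * (b / 2)) * sinh (a / 2)) ^ 2 ≤ (sinh (b / 2) * sinh (t * (a / 2))) ^ 2 :=
    pow_le_pow_left₀ (mul_nonneg htB hA.le)
      (sinh_mul_mul_sinh_le (half_pos ha) (by linarith) ht ht1) 2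
  have key : sinh (a / 2) ^ 2 * (3 * sinh (t * (b / 2)) ^ 2) ≤
      sinh (a / 2) ^ 2 * (4 * sinh (t * (a / 2)) ^ 2 + 1) :=
    calc sinh (a / 2) ^ 2 * (3 * sinh (t * (b / 2)) ^ 2)
        = 3 * (sinh (t * (b / 2)) * sinh (a / 2)) ^ 2 := by ring
      _ ≤ 3 * (sinh (b / 2) * sinh (t * (a / 2))) ^ 2 := by gcongr
      _ = (4 * sinh (a / 2) ^ 2 + 1) * sinh (t * (a / 2)) ^ 2 := by
        rw [mul_pow, ← mul_assoc]; congr 1; linarith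
      _ ≤ sinh (a / 2) ^ 2 * (4 * sinh (t * (a / 2)) ^ 2 + 1) := by
        nlinarith [pow_le_pow_left₀ htA htA_le 2]
  linarith [le_of_mul_le_mul_left key (by positivity)]

theorem div_le_of_three_cosh_eq {a b s D : ℝ} (ha : 0 < a) (hb : 0 < b)
    (h : 3 * cosh b = 4 * cosh a + 1) (hs : 0 < s) (hD : 0 < D)
    (hsD : 4 * cosh (s / 2) ≤ 3 * cosh D - 1) (hsa : s ≤ 2 * a) :
    s / D ≤ 2 * a / b := by
  set t := s / (2 * a) with ht_def
  have ht : 0 < t := by positivity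
  have hta : t * a = s / 2 := by rw [ht_def]; field_simp
  have hcosh : cosh (t * b) ≤ cosh D := by
    have := three_cosh_mul_le ha hb.le h ht ((div_le_one (by positivity)).2 hsa)
    rw [hta] at this
    linarith
  have htb : t * b ≤ D := by
    rwa [cosh_le_cosh, abs_of_pos (by positivity), abs_of_pos hD] at hcosh
  calc s / D ≤ s / (t * b) := by gcongr
    _ = 2 * a / b := by rw [ht_def]; field_simp

theorem ratio_bound_genus_two (s D : ℝ) (hs : 0 < s) (hD : 0 < D)
    (hmain : 4 * Real.cosh (s / 2) ≤ 3 * Real.cosh D - 1)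
    (hjenni : s ≤ 2 * arccosh (1 + Real.sqrt 2)) :
    s / D ≤ 2 * arccosh (1 + Real.sqrt 2) / arccosh ((5 + 4 * Real.sqrt 2) / 3) := by
  have hsqrt : 0 < √2 := by positivity
  have ha : 1 < 1 + √2 := by linarith
  have hb : 1 < (5 + 4 * √2) / 3 := by linarith
  have hcosh : 3 * cosh (arcosh ((5 + 4 * √2) / 3)) = 4 * cosh (arcosh (1 + √2)) + 1 := by
    rw [cosh_arcosh ha.le, cosh_arcosh hb.le]
    ring
  -- `arccosh` is `Real.arcosh` by definition.
  exact div_le_of_three_cosh_eq (arcosh_pos ha) (arcosh_pos hb) hcosh hs hD hmain hjenni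
end

section
/- 2·arccosh(1 + √2) / arccosh((5 + 4√2)/3) < 8/5. -/
open Real

/-!
Both arccosh values are logarithms of explicit algebraic numbers, `u ≈ 4.6116` and `v ≈ 6.9609`,
so the claim `2 log u / log v < 8 / 5` amounts to `u ^ 5 < v ^ 4`. Two-sided decimal bounds on
`√2` give `u < 4.62` and `v > 6.9`, and `4.62 ^ 5 < 6.9 ^ 4` is a numerical check.
-/

lemma sqrt_two_mem_Ioo : Real.sqrt 2 ∈ Set.Ioo (1.414 : ℝ) 1.415 := by
  have hsq : Real.sqrt 2 ^ 2 = 2 := Real.sq_sqrt zero_le_two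
  have hnonneg := Real.sqrt_nonneg 2
  constructor <;> nlinarith

lemma arccosh_one_add_sqrt_two_lt : arccosh (1 + Real.sqrt 2) < Real.log 4.62 := by
  obtain ⟨-, hupper⟩ := sqrt_two_mem_Ioo
  have hsq : Real.sqrt 2 ^ 2 = 2 := Real.sq_sqrt zero_le_two
  have hroot : Real.sqrt ((1 + Real.sqrt 2) ^ 2 - 1) < 2.2 := by
    rw [Real.sqrt_lt' (by norm_num)]
    nlinarith
  have hpos : 0 < 1 + Real.sqrt 2 + Real.sqrt ((1 + Real.sqrt 2) ^ 2 - 1) := by positivity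
  exact Real.log_lt_log hpos (by linarith)

lemma log_lt_arccosh_five_add_four_sqrt_two_div_three :
    Real.log 6.9 < arccosh ((5 + 4 * Real.sqrt 2) / 3) := by
  obtain ⟨hlower, -⟩ := sqrt_two_mem_Ioo
  have hsq : Real.sqrt 2 ^ 2 = 2 := Real.sq_sqrt zero_le_two
  have hroot : 3.4 < Real.sqrt (((5 + 4 * Real.sqrt 2) / 3) ^ 2 - 1) := by
    rw [Real.lt_sqrt (by norm_num)]
    nlinarith
  exact Real.log_lt_log (by norm_num) (by linarith)

lemma five_mul_log_lt_four_mul_log : 5 * Real.log 4.62 < 4 * Real.log 6.9 := by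
  calc 5 * Real.log 4.62 = Real.log (4.62 ^ 5) := by rw [Real.log_pow]; norm_num
    _ < Real.log (6.9 ^ 4) := Real.log_lt_log (by positivity) (by norm_num)
    _ = 4 * Real.log 6.9 := by rw [Real.log_pow]; norm_num

theorem genus_two_ratio_lt :
    2 * arccosh (1 + Real.sqrt 2) / arccosh ((5 + 4 * Real.sqrt 2) / 3) < 8 / 5 := by
  have hnum := arccosh_one_add_sqrt_two_lt
  have hden := log_lt_arccosh_five_add_four_sqrt_two_div_three
  have hlog_pos : 0 < Real.log 6.9 := Real.log_pos (by norm_num)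
  rw [div_lt_iff₀ (by linarith)]
  linarith [five_mul_log_lt_four_mul_log]
end
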